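/- Let n_1, n_2 ≥ 1, ℓ_1, ℓ_2 ≥ 0, m_1 ≤ ℓ_1 n_1 and m_2 ≤ ℓ_2 n_2. If A ∈ M_{n_1×n_1}(R_{≤ℓ_1}) is (ℓ_1,q^{m_1})-weakly Hadamard and B ∈ M_{n_2×n_2}(R_{≤ℓ_2}) is (ℓ_2,q^{m_2})-weakly Hadamard, then the Kronecker product A ⊗ B is an (ℓ_1+ℓ_2, q^{m_1 n_2 + m_2 n_1})-weakly Hadamard matrix. -/

import Mathlib

open scoped NNReal

open Classical in
/-- The absolute value `|f| = q^{-ν(f)}` on `K = Fq((x⁻¹))`, realized as the Laurent series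
field `Fq((t))` with `t = x⁻¹`, so that the valuation `ν` is the `t`-adic order. -/
noncomputable def kabs (Fq : Type) [Field Fq] [Fintype Fq] (f : LaurentSeries Fq) : ℝ≥0 :=
  if f = 0 then 0 else (Fintype.card Fq : ℝ≥0) ^ (-(HahnSeries.order f))

/-- The embedding of the polynomial ring `R = Fq[x]` into `K = Fq((x⁻¹))`, sending `x` to
`t⁻¹`, i.e. to the Laurent series `single (-1) 1`. -/
noncomputable def polyToK (Fq : Type) [Field Fq] [Fintype Fq] (p : Polynomial Fq) :
    LaurentSeries Fq :=
  Polynomial.eval₂ HahnSeries.C (HahnSeries.single (-1 : ℤ) (1 : Fq)) p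

/-- The infinity norm on `K^ι`, `K = Fq((x⁻¹))`. -/
noncomputable def vnorm (Fq : Type) [Field Fq] [Fintype Fq] {ι : Type} [Fintype ι]
    (v : ι → LaurentSeries Fq) : ℝ≥0 :=
  Finset.univ.sup fun i => kabs Fq (v i)

/-- A (finite) family of vectors of `K^ι₁` is orthogonal if its members are nonzero and the
norm of any linear combination of them is the maximum of the norms of the summands. -/
def IsOrthTuple (Fq : Type) [Field Fq] [Fintype Fq] {ι₁ ι₂ : Type} [Fintype ι₁] [Fintype ι₂]
    (u : ι₂ → ι₁ → LaurentSeries Fq) : Prop :=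
  (∀ j, u j ≠ 0) ∧
    ∀ c : ι₂ → LaurentSeries Fq,
      vnorm Fq (∑ j, c j • u j) = Finset.univ.sup fun j => vnorm Fq (c j • u j)

/-- A square matrix over `R = Fq[x]` is `(l, q^m)`-Hadamard if its entries have degree at
most `l`, its columns form an orthogonal set in `K^ι`, and `|det| = q^m`. -/
def IsHadamard (Fq : Type) [Field Fq] [Fintype Fq] {ι : Type} [Fintype ι] [DecidableEq ι]
    (l m : ℕ) (A : Matrix ι ι (Polynomial Fq)) : Prop :=
  (∀ i j, (A i j).degree ≤ (l : ℕ)) ∧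
    IsOrthTuple Fq (fun j i => polyToK Fq (A i j)) ∧
    kabs Fq (polyToK Fq A.det) = (Fintype.card Fq : ℝ≥0) ^ m

/-- Two vectors of `K^ι₁` are orthogonal if the norm of any linear combination of them is
the maximum of the norms of the summands. -/
def IsOrthPair (Fq : Type) [Field Fq] [Fintype Fq] {ι₁ : Type} [Fintype ι₁]
    (u v : ι₁ → LaurentSeries Fq) : Prop :=
  ∀ a b : LaurentSeries Fq,
    vnorm Fq (a • u + b • v) = max (vnorm Fq (a • u)) (vnorm Fq (b • v))

/-- A (finite) family of vectors of `K^ι₁` is weakly orthogonal if its members are nonzero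
and pairwise orthogonal. -/
def IsWOrthTuple (Fq : Type) [Field Fq] [Fintype Fq] {ι₁ ι₂ : Type} [Fintype ι₁]
    (u : ι₂ → ι₁ → LaurentSeries Fq) : Prop :=
  (∀ j, u j ≠ 0) ∧ ∀ j j' : ι₂, j ≠ j' → IsOrthPair Fq (u j) (u j')

/-- A square matrix over `R = Fq[x]` is `(l, q^m)`-weakly Hadamard if its entries have degree
at most `l`, its columns form a weakly orthogonal set in `K^ι`, and `|det| = q^m`. -/
def IsWeaklyHadamard (Fq : Type) [Field Fq] [Fintype Fq] {ι : Type} [Fintype ι]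
    [DecidableEq ι] (l m : ℕ) (A : Matrix ι ι (Polynomial Fq)) : Prop :=
  (∀ i j, (A i j).degree ≤ (l : ℕ)) ∧
    IsWOrthTuple Fq (fun j i => polyToK Fq (A i j)) ∧
    kabs Fq (polyToK Fq A.det) = (Fintype.card Fq : ℝ≥0) ^ m

/-! The absolute value on `K` is multiplicative and the sup norm of a vector on `ι₁ × ι₂` is the
supremum of the norms of its slices. Hence a pair of Kronecker columns `P ⊗ Q`, `P' ⊗ Q'` is
orthogonal as soon as `P ⊥ P'` (every slice with fixed second index is a pair of multiples of
`P`, `P'`) or `Q ⊥ Q'` (slice along the first index instead); two distinct columns of `A ⊗ B`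
differ in the `A`-index or in the `B`-index. The determinant is `det A ^ n₂ * det B ^ n₁`. -/

lemma degree_kroneckerMap_mul_le {R ι₁ ι₂ κ₁ κ₂ : Type} [Semiring R] {l₁ l₂ : ℕ}
    {A : Matrix ι₁ κ₁ (Polynomial R)} {B : Matrix ι₂ κ₂ (Polynomial R)}
    (hA : ∀ i j, (A i j).degree ≤ l₁) (hB : ∀ i j, (B i j).degree ≤ l₂) :
    ∀ i j, (Matrix.kroneckerMap (· * ·) A B i j).degree ≤ ((l₁ + l₂ : ℕ) : WithBot ℕ) := by
  rintro ⟨i₁, i₂⟩ ⟨j₁, j₂⟩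
  exact (Polynomial.degree_mul_le _ _).trans <| by
    push_cast
    exact add_le_add (hA i₁ j₁) (hB i₂ j₂)

section KroneckerWeaklyHadamard

variable {Fq : Type} [Field Fq] [Fintype Fq] {ι₁ ι₂ : Type} [Fintype ι₁] [Fintype ι₂]

variable (Fq) in
noncomputable def kabsHom : LaurentSeries Fq →*₀ ℝ≥0 where
  toFun := kabs Fq
  map_zero' := by simp [kabs]
  map_one' := by simp [kabs]
  map_mul' f g := by
    by_cases hf : f = 0
    · simp [kabs, hf]
    by_cases hg : g = 0
    · simp [kabs, hg]
    have hq : (Fintype.card Fq : ℝ≥0) ≠ 0 := by exact_mod_cast Fintype.card_ne_zero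
    simp only [kabs, if_neg hf, if_neg hg, if_neg (mul_ne_zero hf hg),
      HahnSeries.order_mul hf hg, neg_add, zpow_add₀ hq]

lemma kabs_mul (f g : LaurentSeries Fq) : kabs Fq (f * g) = kabs Fq f * kabs Fq g :=
  map_mul (kabsHom Fq) f g

lemma kabs_pow (f : LaurentSeries Fq) (n : ℕ) : kabs Fq (f ^ n) = kabs Fq f ^ n :=
  map_pow (kabsHom Fq) f n

lemma polyToK_mul (p q : Polynomial Fq) : polyToK Fq (p * q) = polyToK Fq p * polyToK Fq q :=
  Polynomial.eval₂_mul _ _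

lemma polyToK_pow (p : Polynomial Fq) (n : ℕ) : polyToK Fq (p ^ n) = polyToK Fq p ^ n :=
  Polynomial.eval₂_pow _ _ _

lemma vnorm_prod_eq_sup_right (w : ι₁ × ι₂ → LaurentSeries Fq) :
    vnorm Fq w = Finset.univ.sup fun i₂ => vnorm Fq fun i₁ => w (i₁, i₂) := by
  rw [vnorm, ← Finset.univ_product_univ, Finset.sup_product_right]
  rfl

lemma vnorm_prod_eq_sup_left (w : ι₁ × ι₂ → LaurentSeries Fq) :
    vnorm Fq w = Finset.univ.sup fun i₁ => vnorm Fq fun i₂ => w (i₁, i₂) := by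
  rw [vnorm, ← Finset.univ_product_univ, Finset.sup_product_left]
  rfl

lemma IsOrthPair.of_forall_slice_right {u v : ι₁ × ι₂ → LaurentSeries Fq}
    (h : ∀ i₂, IsOrthPair Fq (fun i₁ => u (i₁, i₂)) (fun i₁ => v (i₁, i₂))) :
    IsOrthPair Fq u v := by
  intro a b
  rw [vnorm_prod_eq_sup_right (a • u + b • v), vnorm_prod_eq_sup_right (a • u),
    vnorm_prod_eq_sup_right (b • v), ← Finset.sup_sup]
  exact Finset.sup_congr rfl fun i₂ _ => h i₂ a b

lemma IsOrthPair.of_forall_slice_left {u v : ι₁ × ι₂ → LaurentSeries Fq}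
    (h : ∀ i₁, IsOrthPair Fq (fun i₂ => u (i₁, i₂)) (fun i₂ => v (i₁, i₂))) :
    IsOrthPair Fq u v := by
  intro a b
  rw [vnorm_prod_eq_sup_left (a • u + b • v), vnorm_prod_eq_sup_left (a • u),
    vnorm_prod_eq_sup_left (b • v), ← Finset.sup_sup]
  exact Finset.sup_congr rfl fun i₁ _ => h i₁ a b

lemma IsOrthPair.smul {u v : ι₁ → LaurentSeries Fq} (h : IsOrthPair Fq u v)
    (c d : LaurentSeries Fq) : IsOrthPair Fq (c • u) (d • v) := fun a b => by
  simpa only [smul_smul] using h (a * c) (b * d)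

lemma IsOrthPair.kron_left {P P' : ι₁ → LaurentSeries Fq} (h : IsOrthPair Fq P P')
    (Q Q' : ι₂ → LaurentSeries Fq) :
    IsOrthPair Fq (fun i : ι₁ × ι₂ => P i.1 * Q i.2) (fun i : ι₁ × ι₂ => P' i.1 * Q' i.2) :=
  .of_forall_slice_right fun i₂ => by
    convert h.smul (Q i₂) (Q' i₂) using 1 <;> funext i₁ <;> exact mul_comm _ _

lemma IsOrthPair.kron_right {Q Q' : ι₂ → LaurentSeries Fq} (h : IsOrthPair Fq Q Q')
    (P P' : ι₁ → LaurentSeries Fq) :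
    IsOrthPair Fq (fun i : ι₁ × ι₂ => P i.1 * Q i.2) (fun i : ι₁ × ι₂ => P' i.1 * Q' i.2) :=
  .of_forall_slice_left fun i₁ => h.smul (P i₁) (P' i₁)

lemma IsWOrthTuple.kron {κ₁ κ₂ : Type} {u : κ₁ → ι₁ → LaurentSeries Fq}
    {v : κ₂ → ι₂ → LaurentSeries Fq} (hu : IsWOrthTuple Fq u) (hv : IsWOrthTuple Fq v) :
    IsWOrthTuple Fq fun (j : κ₁ × κ₂) (i : ι₁ × ι₂) => u j.1 i.1 * v j.2 i.2 := by
  refine ⟨fun j hj => ?_, fun j j' hne => ?_⟩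
  · obtain ⟨i₁, hi₁⟩ := Function.ne_iff.mp (hu.1 j.1)
    obtain ⟨i₂, hi₂⟩ := Function.ne_iff.mp (hv.1 j.2)
    exact mul_ne_zero hi₁ hi₂ (congrFun hj (i₁, i₂))
  by_cases h₁ : j.1 = j'.1
  · exact IsOrthPair.kron_right (hv.2 _ _ fun h₂ => hne (Prod.ext h₁ h₂)) _ _
  · exact IsOrthPair.kron_left (hu.2 _ _ h₁) _ _

end KroneckerWeaklyHadamard

theorem kronecker_isWeaklyHadamard_general (Fq : Type) [Field Fq] [Fintype Fq]
    (n₁ n₂ l₁ l₂ m₁ m₂ : ℕ)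
    (A : Matrix (Fin n₁) (Fin n₁) (Polynomial Fq))
    (B : Matrix (Fin n₂) (Fin n₂) (Polynomial Fq))
    (hA : IsWeaklyHadamard Fq l₁ m₁ A) (hB : IsWeaklyHadamard Fq l₂ m₂ B) :
    IsWeaklyHadamard Fq (l₁ + l₂) (m₁ * n₂ + m₂ * n₁) (Matrix.kroneckerMap (· * ·) A B) := by
  obtain ⟨hAdeg, hAorth, hAdet⟩ := hA
  obtain ⟨hBdeg, hBorth, hBdet⟩ := hB
  refine ⟨degree_kroneckerMap_mul_le hAdeg hBdeg, ?_, ?_⟩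
  · simpa only [Matrix.kroneckerMap_apply, polyToK_mul] using hAorth.kron hBorth
  · rw [Matrix.det_kronecker, Fintype.card_fin, Fintype.card_fin, polyToK_mul, kabs_mul,
      polyToK_pow, polyToK_pow, kabs_pow, kabs_pow, hAdet, hBdet, ← pow_mul, ← pow_mul, ← pow_add]

/-- **Kronecker products of weakly Hadamard matrices.** If `A` is `(l₁, q^{m₁})`-weakly
Hadamard of size `n₁ × n₁` and `B` is `(l₂, q^{m₂})`-weakly Hadamard of size `n₂ × n₂` over
`Fq[x]`, then the Kronecker product `A ⊗ B` is `(l₁ + l₂, q^{m₁n₂ + m₂n₁})`-weakly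
Hadamard. -/
theorem kronecker_isWeaklyHadamard (Fq : Type) [Field Fq] [Fintype Fq]
    (n₁ n₂ l₁ l₂ m₁ m₂ : ℕ) (hn₁ : 1 ≤ n₁) (hn₂ : 1 ≤ n₂)
    (hm₁ : m₁ ≤ l₁ * n₁) (hm₂ : m₂ ≤ l₂ * n₂)
    (A : Matrix (Fin n₁) (Fin n₁) (Polynomial Fq))
    (B : Matrix (Fin n₂) (Fin n₂) (Polynomial Fq))
    (hA : IsWeaklyHadamard Fq l₁ m₁ A) (hB : IsWeaklyHadamard Fq l₂ m₂ B) :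
    IsWeaklyHadamard Fq (l₁ + l₂) (m₁ * n₂ + m₂ * n₁) (Matrix.kroneckerMap (· * ·) A B) :=
  kronecker_isWeaklyHadamard_general Fq n₁ n₂ l₁ l₂ m₁ m₂ A B hA hB
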